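/- For every C^∞ matrix field τ : ℝ³ → ℝ^{3×3} taking symmetric values, the following identities hold at every point of ℝ³: inc τ = curl((curl τ)ᵀ), and cott τ = inc(curl τ) = inc(sym curl τ). -/

import Mathlib

noncomputable section

open Matrix

/-- Vectors in ℝ³. -/
abbrev V3 := Fin 3 → ℝ
/-- 3×3 real matrices. -/
abbrev M3 := Matrix (Fin 3) (Fin 3) ℝ

/-- Partial derivative ∂ᵢ of a scalar field. -/
def pd (i : Fin 3) (f : V3 → ℝ) : V3 → ℝ :=
  fun x => fderiv ℝ f x (Pi.single i 1)

/-- Gradient matrix of a vector field: (grad v)_{ij} = ∂ⱼ vᵢ. -/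
def vgrad (v : V3 → V3) : V3 → M3 :=
  fun x => Matrix.of fun i j => pd j (fun y => v y i) x

/-- Divergence of a vector field. -/
def vdiv (v : V3 → V3) : V3 → ℝ :=
  fun x => ∑ i, pd i (fun y => v y i) x

/-- Cross product on ℝ³. -/
def cross (a b : V3) : V3 :=
  fun i => a (i + 1) * b (i + 2) - a (i + 2) * b (i + 1)

/-- Curl of a vector field. -/
def vcurl (v : V3 → V3) : V3 → V3 :=
  fun x i => pd (i + 1) (fun y => v y (i + 2)) x - pd (i + 2) (fun y => v y (i + 1)) x

/-- Row-wise curl of a matrix field. -/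
def mcurl (τ : V3 → M3) : V3 → M3 :=
  fun x => Matrix.of fun i j =>
    pd (j + 1) (fun y => τ y i (j + 2)) x - pd (j + 2) (fun y => τ y i (j + 1)) x

/-- Row-wise divergence of a matrix field. -/
def mdiv (τ : V3 → M3) : V3 → V3 :=
  fun x i => ∑ j, pd j (fun y => τ y i j) x

/-- Symmetric part of a matrix. -/
def msym (A : M3) : M3 := (1 / 2 : ℝ) • (A + Aᵀ)

/-- Deviatoric (trace-free) part of a matrix. -/
def devm (A : M3) : M3 := A - ((1 / 3 : ℝ) * A.trace) • (1 : M3)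

/-- The skew-symmetric matrix associated to a vector: mskw(ω) y = ω × y. -/
def mskw (w : V3) : M3 := !![0, -w 2, w 1; w 2, 0, -w 0; -w 1, w 0, 0]

/-- vskw(A) := mskw⁻¹(skw A). -/
def vskw (A : M3) : V3 :=
  (1 / 2 : ℝ) • ![A 2 1 - A 1 2, A 0 2 - A 2 0, A 1 0 - A 0 1]

/-- S⁻¹(A) := Aᵀ − (1/2)(tr A)I. -/
def Sinv (A : M3) : M3 := Aᵀ - ((1 / 2 : ℝ) * A.trace) • (1 : M3)

/-- S(A) := Aᵀ − (tr A)I. -/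
def Sop (A : M3) : M3 := Aᵀ - A.trace • (1 : M3)

/-- Incompatibility operator inc τ := curl (S⁻¹ (curl τ)). -/
def inc (τ : V3 → M3) : V3 → M3 := mcurl fun x => Sinv (mcurl τ x)

/-- Linearized Cotton–York operator cott τ := curl (S⁻¹ (inc τ)). -/
def cott (τ : V3 → M3) : V3 → M3 := mcurl fun x => Sinv (inc τ x)

/-- Hessian matrix of a scalar field. -/
def hess (u : V3 → ℝ) : V3 → M3 :=
  fun x => Matrix.of fun i j => pd i (pd j u) x

/-- Euclidean dot product on ℝ³. -/
def dotp (a b : V3) : ℝ := ∑ i, a i * b i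

/-- Smoothness of a vector field (componentwise C^∞). -/
def SmoothV (v : V3 → V3) : Prop := ∀ i, ContDiff ℝ (⊤ : ℕ∞) fun x => v x i

/-- Smoothness of a matrix field (entrywise C^∞). -/
def SmoothM (τ : V3 → M3) : Prop := ∀ i j, ContDiff ℝ (⊤ : ℕ∞) fun x => τ x i j

/-- Conformal Killing fields. -/
def CK (v : V3 → V3) : Prop :=
  ∃ (a c d : V3) (b : ℝ), ∀ x,
    v x = dotp x x • a - (2 * dotp a x) • x + b • x + cross c x + d

/-- Rigid motions. -/
def RM (v : V3 → V3) : Prop := ∃ a b : V3, ∀ x, v x = cross a x + b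

/-- Lowest-order Raviart–Thomas fields. -/
def RT (v : V3 → V3) : Prop := ∃ (a : V3) (b : ℝ), ∀ x, v x = a + b • x

/-- Polynomial scalar functions of total degree at most k. -/
def PolyLe (k : ℕ) (f : V3 → ℝ) : Prop :=
  ∃ p : MvPolynomial (Fin 3) ℝ, p.totalDegree ≤ k ∧ ∀ x, f x = MvPolynomial.eval x p

/-- Matrix fields with entries in P_k and values symmetric traceless. -/
def PolyLeST (k : ℕ) (τ : V3 → M3) : Prop :=
  (∀ i j, PolyLe k fun x => τ x i j) ∧ (∀ x, (τ x)ᵀ = τ x) ∧ ∀ x, (τ x).trace = 0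


/- ==================== auxiliary lemmas ==================== -/

/-- C^∞ smoothness in the ℕ∞ sense. -/
def Sm (f : V3 → ℝ) : Prop := ContDiff ℝ (⊤:ℕ∞) f

lemma Sm.diff {f : V3 → ℝ} (hf : Sm f) : Differentiable ℝ f :=
  hf.differentiable (by simp)

lemma Sm.pd {f : V3 → ℝ} (hf : Sm f) (i : Fin 3) : Sm (_root_.pd i f) := by
  have h := (contDiff_infty_iff_fderiv.mp hf).2
  exact (ContinuousLinearMap.apply ℝ ℝ (Pi.single i 1)).contDiff.comp h

lemma Sm.add {f g : V3 → ℝ} (hf : Sm f) (hg : Sm g) : Sm (fun x => f x + g x) := ContDiff.add hf hg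
lemma Sm.sub {f g : V3 → ℝ} (hf : Sm f) (hg : Sm g) : Sm (fun x => f x - g x) := ContDiff.sub hf hg
lemma Sm.mul {f g : V3 → ℝ} (hf : Sm f) (hg : Sm g) : Sm (fun x => f x * g x) := ContDiff.mul hf hg
lemma Sm.neg {f : V3 → ℝ} (hf : Sm f) : Sm (fun x => -(f x)) := ContDiff.neg hf
lemma Sm.const (c : ℝ) : Sm (fun _ => c) := contDiff_const
lemma Sm.cmul {f : V3 → ℝ} (hf : Sm f) (c : ℝ) : Sm (fun x => c * f x) := (Sm.const c).mul hf

lemma pd_comm {f : V3 → ℝ} (hf : Sm f) (i j : Fin 3) (x : V3) :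
    pd i (pd j f) x = pd j (pd i f) x := by
  have hdf : Differentiable ℝ (fderiv ℝ f) :=
    (contDiff_infty_iff_fderiv.mp hf).2.differentiable (by simp)
  have h1 : ∀ y, HasFDerivAt f (fderiv ℝ f y) y := fun y => (hf.diff y).hasFDerivAt
  have key : ∀ u v : V3, fderiv ℝ (fun y => fderiv ℝ f y v) x u = fderiv ℝ (fderiv ℝ f) x u v := by
    intro u v
    have := ((ContinuousLinearMap.apply ℝ ℝ v).hasFDerivAt.comp x (hdf x).hasFDerivAt).fderiv
    rw [show (fun y => fderiv ℝ f y v) = (ContinuousLinearMap.apply ℝ ℝ v) ∘ (fderiv ℝ f) from rfl,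
      this]
    rfl
  have hsym := second_derivative_symmetric h1 (hdf x).hasFDerivAt
  calc pd i (pd j f) x = fderiv ℝ (fderiv ℝ f) x (Pi.single i 1) (Pi.single j 1) := key _ _
    _ = fderiv ℝ (fderiv ℝ f) x (Pi.single j 1) (Pi.single i 1) := hsym _ _
    _ = pd j (pd i f) x := (key _ _).symm

lemma pd_add {f g : V3 → ℝ} (hf : Differentiable ℝ f) (hg : Differentiable ℝ g) (i : Fin 3)
    (x : V3) : pd i (fun y => f y + g y) x = pd i f x + pd i g x := by
  simp only [pd, fderiv_fun_add (hf x) (hg x), ContinuousLinearMap.add_apply]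

lemma pd_sub {f g : V3 → ℝ} (hf : Differentiable ℝ f) (hg : Differentiable ℝ g) (i : Fin 3)
    (x : V3) : pd i (fun y => f y - g y) x = pd i f x - pd i g x := by
  simp only [pd, fderiv_fun_sub (hf x) (hg x), ContinuousLinearMap.sub_apply]

lemma pd_neg {f : V3 → ℝ} (i : Fin 3) (x : V3) :
    pd i (fun y => -(f y)) x = -(pd i f x) := by
  simp only [pd, fderiv_fun_neg, ContinuousLinearMap.neg_apply]

lemma pd_zero (i : Fin 3) (x : V3) : pd i (fun _ => (0:ℝ)) x = 0 := by
  simp only [pd, fderiv_const]; simp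

/-- Entrywise smoothness of a matrix field, ℕ∞ version. -/
def SmM (A : V3 → M3) : Prop := ∀ i j, Sm fun x => A x i j

lemma SmoothM.smM {τ : V3 → M3} (h : SmoothM τ) : SmM τ := fun i j => (h i j).of_le (by simp)

lemma SmM.mcurl {A : V3 → M3} (h : SmM A) : SmM (_root_.mcurl A) := by
  intro i j
  have : (fun x => _root_.mcurl A x i j)
      = fun x => pd (j+1) (fun y => A y i (j+2)) x - pd (j+2) (fun y => A y i (j+1)) x := rfl
  rw [this]
  exact ((h i (j+2)).pd (j+1)).sub ((h i (j+1)).pd (j+2))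

lemma Sinv_apply (M : M3) (i j : Fin 3) :
    Sinv M i j = M j i - (1/2 * (M 0 0 + M 1 1 + M 2 2)) * (1 : M3) i j := by
  simp [Sinv, Matrix.sub_apply, Matrix.smul_apply, Matrix.transpose_apply, Matrix.trace,
    Matrix.diag, Fin.sum_univ_three, smul_eq_mul]

lemma SmM.sinv {A : V3 → M3} (h : SmM A) : SmM (fun x => Sinv (A x)) := by
  intro i j
  have : (fun x => Sinv (A x) i j)
      = fun x => A x j i - (1/2 * (A x 0 0 + A x 1 1 + A x 2 2)) * (1 : M3) i j := by
    funext x; rw [Sinv_apply]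
  rw [this]
  exact (h j i).sub ((((((h 0 0).add (h 1 1)).add (h 2 2))).cmul (1/2)).mul (Sm.const _))

lemma SmM.trans {A : V3 → M3} (h : SmM A) : SmM (fun x => (A x)ᵀ) := fun i j => h j i

lemma mcurl_add {A B : V3 → M3} (hA : ∀ i j, Differentiable ℝ fun x => A x i j)
    (hB : ∀ i j, Differentiable ℝ fun x => B x i j) (x : V3) :
    mcurl (fun y => A y + B y) x = mcurl A x + mcurl B x := by
  ext i j
  show pd (j+1) (fun y => (A y + B y) i (j+2)) x - pd (j+2) (fun y => (A y + B y) i (j+1)) x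
    = mcurl A x i j + mcurl B x i j
  simp only [Matrix.add_apply]
  rw [pd_add (hA i (j+2)) (hB i (j+2)), pd_add (hA i (j+1)) (hB i (j+1))]
  show _ = (pd (j+1) (fun y => A y i (j+2)) x - pd (j+2) (fun y => A y i (j+1)) x)
    + (pd (j+1) (fun y => B y i (j+2)) x - pd (j+2) (fun y => B y i (j+1)) x)
  ring

lemma mcurl_sub {A B : V3 → M3} (hA : ∀ i j, Differentiable ℝ fun x => A x i j)
    (hB : ∀ i j, Differentiable ℝ fun x => B x i j) (x : V3) :
    mcurl (fun y => A y - B y) x = mcurl A x - mcurl B x := by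
  ext i j
  show pd (j+1) (fun y => (A y - B y) i (j+2)) x - pd (j+2) (fun y => (A y - B y) i (j+1)) x
    = mcurl A x i j - mcurl B x i j
  simp only [Matrix.sub_apply]
  rw [pd_sub (hA i (j+2)) (hB i (j+2)), pd_sub (hA i (j+1)) (hB i (j+1))]
  show _ = (pd (j+1) (fun y => A y i (j+2)) x - pd (j+2) (fun y => A y i (j+1)) x)
    - (pd (j+1) (fun y => B y i (j+2)) x - pd (j+2) (fun y => B y i (j+1)) x)
  ring

/-- Smoothness of vector fields, ℕ∞ version. -/
def SmV (u : V3 → V3) : Prop := ∀ i, Sm fun x => u x i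

lemma mskw_diag (w : V3) (i : Fin 3) : mskw w i i = 0 := by fin_cases i <;> rfl
lemma mskw_succ (w : V3) (i : Fin 3) : mskw w i (i+1) = -w (i+2) := by fin_cases i <;> rfl
lemma mskw_succ2 (w : V3) (i : Fin 3) : mskw w i (i+2) = w (i+1) := by fin_cases i <;> rfl

lemma fin3_cases (i j : Fin 3) : j = i ∨ j = i + 1 ∨ j = i + 2 := by revert i j; decide

lemma sum3 (g : Fin 3 → ℝ) (i : Fin 3) : ∑ k, g k = g i + g (i+1) + g (i+2) := by
  fin_cases i <;> simp [Fin.sum_univ_three] <;> ring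

lemma mcurl_apply (A : V3 → M3) (x : V3) (i j : Fin 3) :
    mcurl A x i j = pd (j+1) (fun y => A y i (j+2)) x - pd (j+2) (fun y => A y i (j+1)) x := rfl

lemma mcurl_mskw {u : V3 → V3} (x : V3) :
    mcurl (fun y => mskw (u y)) x = vdiv u x • (1 : M3) - (vgrad u x)ᵀ := by
  have a11 : ∀ i : Fin 3, i+1+1 = i+2 := by decide
  have a12 : ∀ i : Fin 3, i+1+2 = i := by decide
  have a21 : ∀ i : Fin 3, i+2+1 = i := by decide
  have a22 : ∀ i : Fin 3, i+2+2 = i+1 := by decide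
  have n1 : ∀ i : Fin 3, i ≠ i + 1 := by decide
  have n2 : ∀ i : Fin 3, i ≠ i + 2 := by decide
  have hdiv : ∀ i : Fin 3, vdiv u x
      = pd i (fun y => u y i) x + pd (i+1) (fun y => u y (i+1)) x
        + pd (i+2) (fun y => u y (i+2)) x := fun i =>
    sum3 (fun k => pd k (fun y => u y k) x) i
  ext i j
  rw [Matrix.sub_apply, Matrix.smul_apply, Matrix.transpose_apply, smul_eq_mul,
    show vgrad u x j i = pd i (fun y => u y j) x from rfl]
  rcases fin3_cases i j with h | h | h <;> subst h
  · rw [mcurl_apply,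
      show (fun y => mskw (u y) j (j+2)) = fun y => u y (j+1) from funext fun y => mskw_succ2 _ _,
      show (fun y => mskw (u y) j (j+1)) = fun y => -(u y (j+2)) from funext fun y => mskw_succ _ _,
      pd_neg, Matrix.one_apply_eq, hdiv j]
    ring
  · rw [mcurl_apply, a11, a12,
      show (fun y => mskw (u y) i i) = fun _ => (0:ℝ) from funext fun y => mskw_diag _ _,
      show (fun y => mskw (u y) i (i+2)) = fun y => u y (i+1) from funext fun y => mskw_succ2 _ _,
      pd_zero, Matrix.one_apply_ne (n1 i)]
    ring
  · rw [mcurl_apply, a21, a22,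
      show (fun y => mskw (u y) i (i+1)) = fun y => -(u y (i+2)) from funext fun y => mskw_succ _ _,
      show (fun y => mskw (u y) i i) = fun _ => (0:ℝ) from funext fun y => mskw_diag _ _,
      pd_zero, pd_neg, Matrix.one_apply_ne (n2 i)]
    ring

lemma mcurl_vgrad {u : V3 → V3} (hu : SmV u) (x : V3) :
    mcurl (fun y => vgrad u y) x = 0 := by
  ext i j
  show pd (j+1) (fun y => vgrad u y i (j+2)) x - pd (j+2) (fun y => vgrad u y i (j+1)) x = 0
  have e : ∀ k : Fin 3, (fun y => vgrad u y i k) = pd k (fun y => u y i) := fun k => rfl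
  rw [e, e, pd_comm (hu i)]
  ring

lemma vdiv_eq_trace_vgrad (u : V3 → V3) (x : V3) : vdiv u x = (vgrad u x).trace := by
  simp [vdiv, vgrad, Matrix.trace, Matrix.diag, Fin.sum_univ_three]

lemma Sinv_smul_one_sub (G : M3) : Sinv (G.trace • (1:M3) - Gᵀ) = -G := by
  ext i j
  simp only [Sinv_apply, Matrix.trace, Matrix.diag, Fin.sum_univ_three, Matrix.sub_apply,
    Matrix.smul_apply, Matrix.transpose_apply, Matrix.neg_apply, Matrix.one_apply, smul_eq_mul]
  fin_cases i <;> fin_cases j <;> simp <;> ring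

lemma Sinv_add (A B : M3) : Sinv (A + B) = Sinv A + Sinv B := by
  ext i j
  simp only [Sinv_apply, Matrix.add_apply]
  ring

/-- Key lemma: adding a (pointwise) skew field `mskw ∘ u` does not change `inc`. -/
lemma inc_add_mskw {σ : V3 → M3} {u : V3 → V3} (hσ : SmM σ) (hu : SmV u) (x : V3) :
    inc (fun y => σ y + mskw (u y)) x = inc σ x := by
  have hskw : SmM (fun y => mskw (u y)) := by
    intro i j
    fin_cases i <;> fin_cases j <;>
      simp only [mskw, Matrix.cons_val', Matrix.cons_val_zero, Matrix.cons_val_one,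
        Matrix.head_cons, Matrix.empty_val', Matrix.cons_val_fin_one, Matrix.head_fin_const,
        Fin.isValue] <;>
      first
        | exact Sm.const 0
        | exact hu 0 | exact hu 1 | exact hu 2
        | exact (hu 0).neg | exact (hu 1).neg | exact (hu 2).neg
  have h1 : mcurl (fun y => σ y + mskw (u y))
      = fun y => mcurl σ y + (vdiv u y • (1:M3) - (vgrad u y)ᵀ) := by
    funext y
    rw [mcurl_add (fun i j => (hσ i j).diff) (fun i j => (hskw i j).diff), mcurl_mskw y]
  have h2 : (fun y => Sinv (mcurl (fun z => σ z + mskw (u z)) y))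
      = fun y => Sinv (mcurl σ y) - vgrad u y := by
    funext y
    rw [show mcurl (fun z => σ z + mskw (u z)) y
        = mcurl σ y + (vdiv u y • (1:M3) - (vgrad u y)ᵀ) from congrFun h1 y]
    rw [Sinv_add, vdiv_eq_trace_vgrad, Sinv_smul_one_sub]
    abel
  show mcurl (fun y => Sinv (mcurl (fun z => σ z + mskw (u z)) y)) x = inc σ x
  rw [h2, show mcurl (fun y => Sinv (mcurl σ y) - vgrad u y) x
      = mcurl (fun y => Sinv (mcurl σ y)) x - mcurl (fun y => vgrad u y) x from
    mcurl_sub (A := fun y => Sinv (mcurl σ y)) (B := fun y => vgrad u y)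
      (fun i j => ((hσ.mcurl).sinv i j).diff) (fun i j => ((hu i).pd j).diff) x,
    mcurl_vgrad hu]
  simp [inc]

lemma trace_mcurl_of_symm {τ : V3 → M3} (hsym : ∀ x, (τ x)ᵀ = τ x) (x : V3) :
    (mcurl τ x).trace = 0 := by
  have e : ∀ (a b : Fin 3), (fun y => τ y a b) = (fun y => τ y b a) := by
    intro a b; funext y
    rw [show τ y a b = (τ y)ᵀ b a from rfl, hsym y]
  simp only [Matrix.trace, Matrix.diag, Fin.sum_univ_three]
  show (pd 1 (fun y => τ y 0 2) x - pd 2 (fun y => τ y 0 1) x)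
    + (pd 2 (fun y => τ y 1 0) x - pd 0 (fun y => τ y 1 2) x)
    + (pd 0 (fun y => τ y 2 1) x - pd 1 (fun y => τ y 2 0) x) = 0
  rw [e 1 0, e 2 0, e 2 1]
  ring

lemma transpose_eq_add_mskw (A : M3) : Aᵀ = A + mskw ((-2:ℝ) • vskw A) := by
  ext i j
  fin_cases i <;> fin_cases j <;>
    simp [mskw, vskw, Matrix.transpose_apply, Matrix.add_apply] <;> ring

lemma msym_eq_add_mskw (A : M3) : msym A = A + mskw ((-1:ℝ) • vskw A) := by
  ext i j
  fin_cases i <;> fin_cases j <;>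
    simp [msym, mskw, vskw, Matrix.transpose_apply, Matrix.add_apply, Matrix.smul_apply] <;> ring

lemma smV_vskw {A : V3 → M3} (h : SmM A) (c : ℝ) : SmV (fun x => c • vskw (A x)) := by
  intro i
  fin_cases i
  · have e : (fun x => (c • vskw (A x)) 0) = fun x => c * (1/2 * (A x 2 1 - A x 1 2)) := by
      funext x; simp [vskw]
    exact e ▸ (((h 2 1).sub (h 1 2)).cmul _).cmul _
  · have e : (fun x => (c • vskw (A x)) 1) = fun x => c * (1/2 * (A x 0 2 - A x 2 0)) := by
      funext x; simp [vskw]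
    exact e ▸ (((h 0 2).sub (h 2 0)).cmul _).cmul _
  · have e : (fun x => (c • vskw (A x)) 2) = fun x => c * (1/2 * (A x 1 0 - A x 0 1)) := by
      funext x; simp [vskw]
    exact e ▸ (((h 1 0).sub (h 0 1)).cmul _).cmul _


/-- identities for inc and cott on symmetric fields. -/
theorem inc_cott_symmetric (τ : V3 → M3) (hτ : SmoothM τ) (hsym : ∀ x, (τ x)ᵀ = τ x) :
    (∀ x, inc τ x = mcurl (fun y => (mcurl τ y)ᵀ) x) ∧
    (∀ x, cott τ x = inc (mcurl τ) x) ∧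
    (∀ x, cott τ x = inc (fun y => msym (mcurl τ y)) x) := by
  have hτSm : SmM τ := hτ.smM
  have ha : ∀ x, inc τ x = mcurl (fun y => (mcurl τ y)ᵀ) x := by
    intro x
    have e : (fun x => Sinv (mcurl τ x)) = fun y => (mcurl τ y)ᵀ := by
      funext y
      rw [Sinv, trace_mcurl_of_symm hsym]
      simp
    show mcurl (fun x => Sinv (mcurl τ x)) x = _
    rw [e]
  have hb : ∀ x, cott τ x = inc (mcurl τ) x := by
    intro x
    have hfun : inc τ = mcurl (fun y => (mcurl τ y)ᵀ) := funext ha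
    show mcurl (fun y => Sinv (inc τ y)) x = _
    rw [hfun]
    show inc (fun z => (mcurl τ z)ᵀ) x = inc (mcurl τ) x
    have e : (fun z => (mcurl τ z)ᵀ) = fun z => mcurl τ z + mskw ((-2:ℝ) • vskw (mcurl τ z)) :=
      funext fun z => transpose_eq_add_mskw _
    rw [e]
    exact inc_add_mskw hτSm.mcurl (smV_vskw hτSm.mcurl (-2)) x
  refine ⟨ha, hb, fun x => ?_⟩
  rw [hb x]
  have e : (fun y => msym (mcurl τ y)) = fun y => mcurl τ y + mskw ((-1:ℝ) • vskw (mcurl τ y)) :=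
    funext fun y => msym_eq_add_mskw _
  rw [e]
  exact (inc_add_mskw hτSm.mcurl (smV_vskw hτSm.mcurl (-1)) x).symm

end
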